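/- arXiv:2102.03495 — 3 statements merged into one kernel-verified Lean document; each statement's English description precedes it below -/
import Mathlib

section
/- Let n ≥ 2, let w ∈ ℝⁿ, let 𝟙 = (1,…,1) ∈ ℝⁿ be the all-ones vector, and assume w and 𝟙 are linearly independent. Let p = w − (⟨w, 𝟙⟩ / ‖𝟙‖²)·𝟙 be the component of w orthogonal to 𝟙 (so p ≠ 0). Then the image of the map t ↦ (w − t·𝟙)/‖w − t·𝟙‖, for t ranging over ℝ, equals the open half of the unit circle {u ∈ span{w, 𝟙} : ‖u‖ = 1 and ⟨u, p⟩ > 0}. -/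
/-!
Every `w - t • 𝟙` has the same inner product `⟪w, p⟫ = ‖p‖ ^ 2 > 0` with `p`, since `p ⟂ 𝟙`;
so the normalized vectors lie on the open half circle. Conversely a unit vector
`u = a • w + b • 𝟙` of the span with `0 < ⟪u, p⟫ = a * ‖p‖ ^ 2` has `a > 0`, hence is the
normalization of `w + (b / a) • 𝟙`.
-/

open scoped RealInnerProductSpace

section
variable {E : Type*} [NormedAddCommGroup E] [InnerProductSpace ℝ E]

theorem inner_sub_smul_left_of_inner_eq_zero (v : E) {e p : E} (hep : ⟪e, p⟫ = 0) (t : ℝ) :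
    ⟪v - t • e, p⟫ = ⟪v, p⟫ := by
  rw [inner_sub_left, real_inner_smul_left, hep, mul_zero, sub_zero]

theorem inv_norm_smul_eq_of_norm_smul_eq_one {a : ℝ} {x : E} (ha : 0 < a) (hx : ‖a • x‖ = 1) :
    ‖x‖⁻¹ • x = a • x := by
  rw [norm_smul, Real.norm_of_nonneg ha.le] at hx
  rw [eq_inv_of_mul_eq_one_left hx]

theorem range_inv_norm_smul_sub_smul {v e p : E} (hep : ⟪e, p⟫ = 0) (hvp : 0 < ⟪v, p⟫) :
    Set.range (fun t : ℝ => ‖v - t • e‖⁻¹ • (v - t • e)) =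
      {u | u ∈ Submodule.span ℝ {v, e} ∧ ‖u‖ = 1 ∧ 0 < ⟪u, p⟫} := by
  have hne (t : ℝ) : v - t • e ≠ 0 := by
    intro h
    have h0 := inner_sub_smul_left_of_inner_eq_zero v hep t
    rw [h, inner_zero_left] at h0
    exact hvp.ne h0
  ext u
  constructor
  · rintro ⟨t, rfl⟩
    refine ⟨?_, norm_smul_inv_norm (hne t), ?_⟩
    · have hv : v ∈ Submodule.span ℝ {v, e} := Submodule.subset_span (by simp)
      have he : e ∈ Submodule.span ℝ {v, e} := Submodule.subset_span (by simp)
      exact Submodule.smul_mem _ _ (Submodule.sub_mem _ hv (Submodule.smul_mem _ t he))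
    · rw [real_inner_smul_left, inner_sub_smul_left_of_inner_eq_zero v hep]
      exact mul_pos (inv_pos.2 (norm_pos_iff.2 (hne t))) hvp
  · rintro ⟨hu, hnorm, hpos⟩
    obtain ⟨a, b, rfl⟩ := Submodule.mem_span_pair.mp hu
    have ha : 0 < a := by
      rw [inner_add_left, real_inner_smul_left, real_inner_smul_left, hep, mul_zero,
        add_zero] at hpos
      exact pos_of_mul_pos_left hpos hvp.le
    have hfactor : a • v + b • e = a • (v - -(b / a) • e) := by
      rw [smul_sub, smul_smul, mul_neg, mul_div_cancel₀ b ha.ne', neg_smul, sub_neg_eq_add]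
    rw [hfactor] at hnorm ⊢
    exact ⟨-(b / a), inv_norm_smul_eq_of_norm_smul_eq_one ha hnorm⟩

theorem inner_sub_proj_eq_zero (v e : E) : ⟪e, v - (⟪v, e⟫ / ‖e‖ ^ 2) • e⟫ = 0 := by
  have h := (ℝ ∙ e).sub_starProjection_mem_orthogonal v
  rw [Submodule.starProjection_singleton, Submodule.mem_orthogonal_singleton_iff_inner_right] at h
  simpa [real_inner_comm] using h

theorem inner_sub_proj_eq_norm_sq (v e : E) :
    ⟪v, v - (⟪v, e⟫ / ‖e‖ ^ 2) • e⟫ = ‖v - (⟪v, e⟫ / ‖e‖ ^ 2) • e‖ ^ 2 := by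
  nth_rewrite 1 [← sub_add_cancel v ((⟪v, e⟫ / ‖e‖ ^ 2) • e)]
  rw [inner_add_left, real_inner_smul_left, inner_sub_proj_eq_zero, mul_zero, add_zero,
    real_inner_self_eq_norm_sq]

theorem LinearIndependent.sub_smul_ne_zero {v e : E} (h : LinearIndependent ℝ ![v, e]) (c : ℝ) :
    v - c • e ≠ 0 := by
  intro hc
  have hcomb : (1 : ℝ) • v + (-c) • e = 0 := by rw [one_smul, neg_smul, ← sub_eq_add_neg, hc]
  exact one_ne_zero (LinearIndependent.pair_iff.mp h 1 (-c) hcomb).1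

end

theorem ic_unit_normal_range_general (n : ℕ)
    (w ones : EuclideanSpace ℝ (Fin n))
    (hind : LinearIndependent ℝ ![w, ones])
    (p : EuclideanSpace ℝ (Fin n))
    (hp : p = w - ((⟪w, ones⟫ / ‖ones‖ ^ 2) • ones)) :
    p ≠ 0 ∧
    (Set.range fun t : ℝ => ‖w - t • ones‖⁻¹ • (w - t • ones)) =
      {u : EuclideanSpace ℝ (Fin n) |
        u ∈ Submodule.span ℝ ({w, ones} : Set (EuclideanSpace ℝ (Fin n))) ∧
        ‖u‖ = 1 ∧ ⟪u, p⟫ > 0} := by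
  subst hp
  have hp0 := hind.sub_smul_ne_zero (⟪w, ones⟫ / ‖ones‖ ^ 2)
  refine ⟨hp0, range_inv_norm_smul_sub_smul (inner_sub_proj_eq_zero w ones) ?_⟩
  rw [inner_sub_proj_eq_norm_sq]
  exact pow_pos (norm_pos_iff.2 hp0) 2

/-- The image of t ↦ (w − t·𝟙)/‖w − t·𝟙‖ is exactly the open half of the unit
circle of span{w, 𝟙} on the side of p, the component of w orthogonal to 𝟙. -/
theorem ic_unit_normal_range (n : ℕ) (hn : 2 ≤ n)
    (w ones : EuclideanSpace ℝ (Fin n)) (hones : ∀ i, ones i = 1)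
    (hind : LinearIndependent ℝ ![w, ones])
    (p : EuclideanSpace ℝ (Fin n))
    (hp : p = w - ((⟪w, ones⟫ / ‖ones‖ ^ 2) • ones)) :
    p ≠ 0 ∧
    (Set.range fun t : ℝ => ‖w - t • ones‖⁻¹ • (w - t • ones)) =
      {u : EuclideanSpace ℝ (Fin n) |
        u ∈ Submodule.span ℝ ({w, ones} : Set (EuclideanSpace ℝ (Fin n))) ∧
        ‖u‖ = 1 ∧ ⟪u, p⟫ > 0} :=
  ic_unit_normal_range_general n w ones hind p hp
end

section
/- Let n ≥ 1, let w ∈ ℝⁿ and b ∈ ℝ, and let K ⊆ ℝⁿ be a bounded set. Then there exist w' ∈ ℝ and b₁, b₂ ∈ ℝ such that for all x ∈ K, ⟨w, x⟩ + σ(⟨w, x⟩ − w'·(Σ_{i=1}^n x_i) + b₁) + b₂ = ⟨w, x⟩ + b, where σ(t) = max(t, 0) is the ReLU function. Consequently, for every function f : ℝ → ℝ, the IC neuron x ↦ f(⟨w, x⟩ + σ(⟨w, x⟩ − w'·Σx_i + b₁) + b₂) agrees on K with the MP neuron x ↦ f(⟨w, x⟩ + b). -/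
open scoped RealInnerProductSpace

/-- paper's Theorem 2: On any bounded set K ⊆ ℝⁿ, for any MP neuron (w, b)
there is an IC neuron (w, w', b₁, b₂) that completely represents it. -/
theorem ic_represents_mp (n : ℕ) (hn : 1 ≤ n)
    (w : EuclideanSpace ℝ (Fin n)) (b : ℝ)
    (K : Set (EuclideanSpace ℝ (Fin n))) (hK : Bornology.IsBounded K) :
    ∃ w' b₁ b₂ : ℝ,
      (∀ x ∈ K,
        ⟪w, x⟫ + max (⟪w, x⟫ - w' * (∑ i, x i) + b₁) 0 + b₂ = ⟪w, x⟫ + b) ∧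
      (∀ f : ℝ → ℝ, ∀ x ∈ K,
        f (⟪w, x⟫ + max (⟪w, x⟫ - w' * (∑ i, x i) + b₁) 0 + b₂) =
          f (⟪w, x⟫ + b)) := by
  obtain ⟨C, hC⟩ := hK.exists_norm_le
  refine ⟨0, -(‖w‖ * C), b, ?_, ?_⟩
  · intro x hx
    have h1 : ⟪w, x⟫ ≤ ‖w‖ * C := by
      calc ⟪w, x⟫ ≤ ‖w‖ * ‖x‖ := real_inner_le_norm w x
        _ ≤ ‖w‖ * C := by
          exact mul_le_mul_of_nonneg_left (hC x hx) (norm_nonneg w)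
    have : max (⟪w, x⟫ - 0 * (∑ i, x i) + -(‖w‖ * C)) 0 = 0 := by
      apply max_eq_right; linarith
    rw [this]; ring
  · intro f x hx
    have h1 : ⟪w, x⟫ ≤ ‖w‖ * C := by
      calc ⟪w, x⟫ ≤ ‖w‖ * ‖x‖ := real_inner_le_norm w x
        _ ≤ ‖w‖ * C := mul_le_mul_of_nonneg_left (hC x hx) (norm_nonneg w)
    have : max (⟪w, x⟫ - 0 * (∑ i, x i) + -(‖w‖ * C)) 0 = 0 := by
      apply max_eq_right; linarith
    rw [this]; ring_nf
end

section
/- There exist w₁, w₂, b₁, b₂ ∈ ℝ such that the function g(x₁, x₂) = σ(w₁x₁ + w₂x₂ + b₁ + σ((w₁ − 1)x₁ + (w₂ − 1)x₂ + b₂)), where σ(t) = max(t, 0), satisfies g(1, 0) = 0, g(0, 1) = 0, g(0, 0) > 0, and g(1, 1) > 0; that is, a single IC neuron with ReLU activation separates the two classes of the XOR problem. -/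
/-- A single IC neuron with ReLU activation solves the XOR problem. -/
theorem ic_neuron_solves_xor :
    ∃ w₁ w₂ b₁ b₂ : ℝ,
      (fun g : ℝ → ℝ → ℝ =>
        g 1 0 = 0 ∧ g 0 1 = 0 ∧ g 0 0 > 0 ∧ g 1 1 > 0)
      (fun x₁ x₂ =>
        max (w₁ * x₁ + w₂ * x₂ + b₁ +
          max ((w₁ - 1) * x₁ + (w₂ - 1) * x₂ + b₂) 0) 0) := by
  refine ⟨1/4, 1/4, -7/20, 13/20, ?_, ?_, ?_, ?_⟩ <;> norm_num [max_eq_right, max_eq_left]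
end
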